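/- arXiv:2511.13498 — 3 statements merged into one kernel-verified Lean document; each statement's English description precedes it below -/
import Mathlib

section
/- Fix n ∈ ℕ and work in the polynomial ring R over ℂ with one variable X_A for each subset A ⊆ [n]. Let N, L ⊆ [n] be disjoint and let M ⊆ [n] be disjoint from N and L with 2|M| ∈ 𝓜_{N,L}. Then the Lichtenstein embedding equation p^M_{N,L} lies in the ℂ-linear span of the quadratic embedding equations { ex_{(H,H̄)} : (H, H̄) an antipode of Q_{N,L} }, i.e. of { ex_{(H, H Δ S)} : N ⊆ H ⊆ [n]∖L }, where S = [n]∖(N∪L). -/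
open scoped symmDiff
open MvPolynomial

/-- `inv(A,B)`: the number of pairs `(a,b) ∈ A × B` with `a > b`. -/
def invCount {n : ℕ} (A B : Finset (Fin n)) : ℕ :=
  ((A ×ˢ B).filter (fun p => p.2 < p.1)).card

/-- `ℓ(i,A)`: the number of elements of `A` smaller than `i`. -/
def low {n : ℕ} (i : Fin n) (A : Finset (Fin n)) : ℕ :=
  (A.filter (fun a => a < i)).card

/-- The sign exponent `[K, K̄]` attached to the ordered antipode `(K, K Δ S)` of the
subcube `Q_{N,L}`, where `S = [n] ∖ (N ∪ L)` and complements are taken in `[n]`. -/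
def signExp {n : ℕ} (N L K : Finset (Fin n)) : ℕ :=
  (K ∆ (N ∪ L)ᶜ)ᶜ.card * (N.card + L.card)
    + Nat.choose (K ∆ (N ∪ L)ᶜ)ᶜ.card 2
    + invCount (K ∆ (N ∪ L)ᶜ)ᶜ (K ∆ (N ∪ L)ᶜ)
    + n * (K ∆ (N ∪ L)ᶜ).card
    + invCount L (K \ N)
    + Nat.choose N.card 2
    + invCount N (K \ N)

/-- The quadratic embedding equation `ex_{(K, K̄)}` of the antipode `(K, K Δ S)` of the
subcube `Q_{N,L}`, where `S = [n] ∖ (N ∪ L)`, as a polynomial in variables `X_A`,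
`A ⊆ [n]`. -/
noncomputable def exEq (n : ℕ) (N L K : Finset (Fin n)) :
    MvPolynomial (Finset (Fin n)) ℂ :=
  (∑ i ∈ ((N ∪ L)ᶜ : Finset (Fin n)),
      ((-1 : ℂ) ^ (low i K + low i (K ∆ (N ∪ L)ᶜ))) •
        (X (K ∆ {i}) * X ((K ∆ (N ∪ L)ᶜ) ∆ {i})))
  - (if Odd ((N ∪ L)ᶜ : Finset (Fin n)).card then X K * X (K ∆ (N ∪ L)ᶜ) else 0)

/-- The Lichtenstein embedding equation `p^M_{N,L}`. -/
noncomputable def pEq (n : ℕ) (N L M : Finset (Fin n)) :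
    MvPolynomial (Finset (Fin n)) ℂ :=
  ∑ K ∈ (Finset.univ : Finset (Finset (Fin n))).filter
      (fun K => N ⊆ K ∧ Disjoint K L),
    ((-1 : ℂ) ^ ((Kᶜ ∩ M).card + signExp N L K)) • (X K * X (K ∆ (N ∪ L)ᶜ))

/-- The admissible set `𝓜_{N,L}` of values of `2|M|`. -/
def admissible (n : ℕ) {m : ℕ} (N L : Finset (Fin m)) : Set ℤ :=
  {x | (∃ k : ℤ, ∃ ε : ℤ, (ε = 0 ∨ ε = 1) ∧
        x = 4 * k + 2 * (((n + 1) / 2 : ℕ) : ℤ) - N.card - L.card - ε) ∧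
    x ∉ ({(n : ℤ) - N.card - L.card - 2, (n : ℤ) - N.card - L.card - 1,
          (n : ℤ) - N.card - L.card, (n : ℤ) - N.card - L.card + 1,
          (n : ℤ) - N.card - L.card + 2} : Set ℤ)}

section auxlemmas
variable {n : ℕ}
open Finset

variable {n : ℕ}
open Finset

lemma low_union {i : Fin n} {A B : Finset (Fin n)} (h : Disjoint A B) :
    low i (A ∪ B) = low i A + low i B := by
  unfold low
  rw [filter_union, card_union_of_disjoint (disjoint_filter_filter h)]

lemma low_univ (i : Fin n) : low i (univ : Finset (Fin n)) = i := by
  unfold low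
  have : (univ : Finset (Fin n)).filter (fun a => a < i) = Finset.Iio i := by
    ext x; simp
  rw [this, Fin.card_Iio]

lemma low_compl (i : Fin n) (A : Finset (Fin n)) : low i A + low i Aᶜ = i := by
  rw [← low_union disjoint_compl_right, union_compl, low_univ]

lemma low_erase (i : Fin n) (A : Finset (Fin n)) : low i (A.erase i) = low i A := by
  unfold low
  congr 1
  ext x
  simp only [mem_filter, mem_erase]
  exact ⟨fun h => ⟨h.1.2, h.2⟩, fun h => ⟨⟨ne_of_lt h.2, h.1⟩, h.2⟩⟩

lemma card_symmDiff_aux (X Y : Finset (Fin n)) :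
    (X ∆ Y).card + 2 * (X ∩ Y).card = X.card + Y.card := by
  have h1 : X ∆ Y = (X ∪ Y) \ (X ∩ Y) := symmDiff_eq_sup_sdiff_inf X Y
  have h2 : (X ∩ Y) ⊆ (X ∪ Y) := (inter_subset_left).trans subset_union_left
  have h3 := Finset.card_sdiff_of_subset h2
  have h4 := Finset.card_union_add_card_inter X Y
  have h5 := Finset.card_le_card h2
  rw [h1]
  omega

lemma low_symmDiff (i : Fin n) (A B : Finset (Fin n)) :
    low i (A ∆ B) + 2 * low i (A ∩ B) = low i A + low i B := by
  unfold low
  have h1 : (A ∆ B).filter (fun a => a < i) =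
      (A.filter (fun a => a < i)) ∆ (B.filter (fun a => a < i)) := by
    ext x; simp only [mem_filter, Finset.mem_symmDiff]; tauto
  have h2 : (A ∩ B).filter (fun a => a < i) =
      (A.filter (fun a => a < i)) ∩ (B.filter (fun a => a < i)) := by
    ext x; simp only [mem_filter, mem_inter]; tauto
  rw [h1, h2]
  exact card_symmDiff_aux _ _

lemma invCount_union_left {A A' B : Finset (Fin n)} (h : Disjoint A A') :
    invCount (A ∪ A') B = invCount A B + invCount A' B := by
  unfold invCount
  rw [union_product, filter_union, card_union_of_disjoint]
  refine disjoint_filter_filter ?_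
  rw [Finset.disjoint_left]
  rintro ⟨a, b⟩ hp hp'
  exact (Finset.disjoint_left.mp h) (mem_product.mp hp).1 (mem_product.mp hp').1

lemma invCount_union_right {A B B' : Finset (Fin n)} (h : Disjoint B B') :
    invCount A (B ∪ B') = invCount A B + invCount A B' := by
  unfold invCount
  rw [product_union, filter_union, card_union_of_disjoint]
  refine disjoint_filter_filter ?_
  rw [Finset.disjoint_left]
  rintro ⟨a, b⟩ hp hp'
  exact (Finset.disjoint_left.mp h) (mem_product.mp hp).2 (mem_product.mp hp').2

lemma invCount_singleton_left (i : Fin n) (B : Finset (Fin n)) :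
    invCount {i} B = low i B := by
  unfold invCount low
  rw [singleton_product, filter_map, card_map]
  rfl

lemma invCount_singleton_right {A : Finset (Fin n)} {i : Fin n} (h : i ∉ A) :
    invCount A {i} + low i A = A.card := by
  unfold invCount low
  rw [product_singleton, filter_map, card_map]
  simp only [Function.comp_def, Function.Embedding.coeFn_mk]
  have h2 : A.filter (fun a => i < a) = A.filter (fun a => ¬ a < i) := by
    ext x
    simp only [mem_filter]
    constructor
    · exact fun hx => ⟨hx.1, not_lt.mpr (le_of_lt hx.2)⟩
    · rintro ⟨hx, hn⟩
      exact ⟨hx, lt_of_le_of_ne (not_lt.mp hn) (fun he => h (he ▸ hx))⟩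
  rw [h2, add_comm]
  exact card_filter_add_card_filter_not _


lemma invCount_insert_right {A C : Finset (Fin n)} {i : Fin n} (hC : i ∉ C) :
    invCount A (insert i C) = invCount A C + invCount A {i} := by
  rw [Finset.insert_eq, union_comm,
    invCount_union_right (Finset.disjoint_singleton_right.mpr hC)]

lemma signExp_flip_core (N L K : Finset (Fin n)) (i : Fin n) (hNL : Disjoint N L)
    (hiN : i ∉ N) (hiL : i ∉ L) (hiK : i ∉ K) :
    (signExp N L (K ∆ {i}) + signExp N L K) % 2 = (n + low i ((N ∪ L)ᶜ)) % 2 := by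
  classical
  have hiS : i ∈ (N ∪ L)ᶜ := by simp [Finset.mem_compl, Finset.mem_union, hiN, hiL]
  set S : Finset (Fin n) := (N ∪ L)ᶜ with hSdef
  set B : Finset (Fin n) := K ∆ S with hBdef
  have hiB : i ∈ B := Finset.mem_symmDiff.mpr (Or.inr ⟨hiS, hiK⟩)
  have hiBc : i ∉ Bᶜ := by simp [hiB]
  have hKi : K ∆ {i} = insert i K := by
    rw [symmDiff_comm, Disjoint.symmDiff_eq_sup
      (Finset.disjoint_singleton_left.mpr hiK)]
    rw [Finset.insert_eq]
    rfl
  have hKiS : (K ∆ {i}) ∆ S = B.erase i := by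
    have h1 : (K ∆ {i}) ∆ S = B ∆ {i} := by
      rw [symmDiff_assoc, symmDiff_comm {i} S, ← symmDiff_assoc]
    have h2 : B ∆ {i} = B.erase i := by
      ext x
      by_cases hx : x = i <;>
        simp [Finset.mem_symmDiff, hx, hiB, Finset.mem_erase]
    rw [h1, h2]
  have hKiN : (K ∆ {i}) \ N = insert i (K \ N) := by
    rw [hKi, Finset.insert_sdiff_of_notMem _ hiN]
  have hc1 : ((B.erase i)ᶜ).card = Bᶜ.card + 1 := by
    rw [Finset.compl_erase, Finset.card_insert_of_notMem hiBc]
  have hc2 : (B.erase i).card + 1 = B.card := Finset.card_erase_add_one hiB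
  have hiKN : i ∉ K \ N := by simp [hiK]
  have h3a : invCount ((B.erase i)ᶜ) (B.erase i)
      = low i B + invCount Bᶜ (B.erase i) := by
    rw [Finset.compl_erase, Finset.insert_eq,
      invCount_union_left (Finset.disjoint_singleton_left.mpr hiBc),
      invCount_singleton_left, low_erase]
  have h3b : invCount Bᶜ B = invCount Bᶜ (B.erase i) + invCount Bᶜ {i} := by
    have h := invCount_insert_right (A := Bᶜ) (Finset.notMem_erase i B)
    rwa [Finset.insert_erase hiB] at h
  have h3c : invCount Bᶜ {i} + low i Bᶜ = Bᶜ.card := invCount_singleton_right hiBc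
  have h3d : low i B + low i Bᶜ = (i : ℕ) := low_compl i B
  have h5 : invCount L (insert i (K \ N)) = invCount L (K \ N) + invCount L {i} :=
    invCount_insert_right hiKN
  have h5b : invCount L {i} + low i L = L.card := invCount_singleton_right hiL
  have h7 : invCount N (insert i (K \ N)) = invCount N (K \ N) + invCount N {i} :=
    invCount_insert_right hiKN
  have h7b : invCount N {i} + low i N = N.card := invCount_singleton_right hiN
  have hdLS : Disjoint L S := Disjoint.mono_left subset_union_right disjoint_compl_right
  have hdNS : Disjoint N S := Disjoint.mono_left subset_union_left disjoint_compl_right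
  have hlowp : low i N + (low i L + low i S) = (i : ℕ) := by
    rw [← low_union hdLS, ← low_union (Finset.disjoint_union_right.mpr ⟨hNL, hdNS⟩),
      ← Finset.union_assoc, Finset.union_compl, low_univ]
  have hch : (Bᶜ.card + 1).choose 2 = Bᶜ.card.choose 2 + Bᶜ.card := by
    rw [Nat.choose_succ_succ, Nat.choose_one_right, Nat.add_comm]
  have hn2 : n * B.card = n * (B.erase i).card + n := by
    rw [← hc2]; ring
  unfold signExp
  rw [← hSdef, ← hBdef, hKiS, hKiN, hc1, h3a, h3b, h5, h7, hch, hn2,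
    add_mul, one_mul]
  generalize Bᶜ.card * (N.card + L.card) = g1
  generalize n * (B.erase i).card = g2
  omega

lemma signExp_flip (N L K : Finset (Fin n)) (i : Fin n) (hNL : Disjoint N L)
    (hiN : i ∉ N) (hiL : i ∉ L) :
    (signExp N L (K ∆ {i}) + signExp N L K) % 2 = (n + low i ((N ∪ L)ᶜ)) % 2 := by
  by_cases hiK : i ∈ K
  · have h := signExp_flip_core N L (K ∆ {i}) i hNL hiN hiL
      (by simp [Finset.mem_symmDiff, hiK])
    rw [symmDiff_symmDiff_cancel_right] at h
    omega
  · exact signExp_flip_core N L K i hNL hiN hiL hiK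

lemma interM_flip_core (M K : Finset (Fin n)) (i : Fin n) (hiK : i ∉ K) :
    (((K ∆ {i})ᶜ ∩ M).card + (Kᶜ ∩ M).card) % 2 = (if i ∈ M then 1 else 0) % 2 := by
  classical
  have hKi : K ∆ {i} = insert i K := by
    rw [symmDiff_comm, Disjoint.symmDiff_eq_sup
      (Finset.disjoint_singleton_left.mpr hiK), Finset.insert_eq]
    rfl
  rw [hKi, Finset.compl_insert, Finset.erase_inter]
  by_cases hiM : i ∈ M
  · have hi : i ∈ Kᶜ ∩ M := by simp [hiK, hiM]
    have h := Finset.card_erase_add_one hi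
    rw [if_pos hiM]
    omega
  · rw [Finset.erase_eq_of_notMem (by simp [hiM]), if_neg hiM]
    omega

lemma interM_flip (M K : Finset (Fin n)) (i : Fin n) :
    (((K ∆ {i})ᶜ ∩ M).card + (Kᶜ ∩ M).card) % 2 = (if i ∈ M then 1 else 0) % 2 := by
  by_cases hiK : i ∈ K
  · have h := interM_flip_core M (K ∆ {i}) i (by simp [Finset.mem_symmDiff, hiK])
    rw [symmDiff_symmDiff_cancel_right] at h
    omega
  · exact interM_flip_core M K i hiK

lemma neg_one_pow_congr_aux {a b : ℕ} (h : a % 2 = b % 2) : ((-1 : ℂ))^a = (-1)^b := by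
  conv_lhs => rw [← Nat.div_add_mod a 2]
  conv_rhs => rw [← Nat.div_add_mod b 2]
  rw [pow_add, pow_add, pow_mul, pow_mul, h]
  norm_num

lemma key_sign (N L M K : Finset (Fin n)) (i : Fin n) (hNL : Disjoint N L)
    (hiN : i ∉ N) (hiL : i ∉ L) :
    ((-1:ℂ))^(((K ∆ {i})ᶜ ∩ M).card + signExp N L (K ∆ {i}))
        * (-1:ℂ)^(low i (K ∆ {i}) + low i ((K ∆ {i}) ∆ (N ∪ L)ᶜ))
      = (if i ∈ M then (-1:ℂ) else 1)
        * ((-1:ℂ)^n * (-1:ℂ)^((Kᶜ ∩ M).card + signExp N L K)) := by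
  classical
  have h1 := signExp_flip N L K i hNL hiN hiL
  have h2 := interM_flip M K i
  have h3 := low_symmDiff i (K ∆ {i}) ((N ∪ L)ᶜ)
  have h4 : (if i ∈ M then (-1:ℂ) else 1) = (-1:ℂ)^(if i ∈ M then 1 else 0) := by
    by_cases hiM : i ∈ M <;> simp [hiM]
  rw [h4, ← pow_add, ← pow_add, ← pow_add]
  apply neg_one_pow_congr_aux
  by_cases hiM : i ∈ M
  · rw [if_pos hiM] at h2 ⊢
    omega
  · rw [if_neg hiM] at h2 ⊢
    omega


end auxlemmas

section main
variable {n : ℕ}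

lemma hsum_ite_aux (S M : Finset (Fin n)) (hMS : M ⊆ S) :
    ∑ i ∈ S, (if i ∈ M then (-1:ℂ) else 1) = (S.card : ℂ) - 2 * M.card := by
  classical
  have h1 : ∀ i ∈ S, (if i ∈ M then (-1:ℂ) else 1)
      = 1 - 2 * (if i ∈ M then (1:ℂ) else 0) := by
    intro i _
    by_cases hiM : i ∈ M <;> simp [hiM] <;> ring
  rw [Finset.sum_congr rfl h1, Finset.sum_sub_distrib, Finset.sum_const,
    ← Finset.mul_sum, Finset.sum_boole]
  have h2 : S.filter (fun i => i ∈ M) = M := by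
    rw [Finset.filter_mem_eq_inter]
    exact Finset.inter_eq_right.mpr hMS
  rw [h2]
  simp

lemma main_identity (N L M : Finset (Fin n)) (hNL : Disjoint N L)
    (hMS : M ⊆ (N ∪ L)ᶜ) :
    ∑ K ∈ (Finset.univ : Finset (Finset (Fin n))).filter
        (fun K => N ⊆ K ∧ Disjoint K L),
        ((-1:ℂ) ^ ((Kᶜ ∩ M).card + signExp N L K)) • exEq n N L K
      = ((((((N ∪ L)ᶜ : Finset (Fin n)).card : ℂ) - 2 * M.card) * (-1:ℂ)^n
          - (if Odd (((N ∪ L)ᶜ : Finset (Fin n)).card) then (1:ℂ) else 0)))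
          • pEq n N L M := by
  classical
  set S : Finset (Fin n) := (N ∪ L)ᶜ with hS
  set cube : Finset (Finset (Fin n)) :=
    (Finset.univ : Finset (Finset (Fin n))).filter
      (fun K => N ⊆ K ∧ Disjoint K L) with hcube
  have hiNL : ∀ i ∈ S, i ∉ N ∧ i ∉ L := by
    intro i hi
    rw [hS] at hi
    simpa [Finset.mem_compl, Finset.mem_union, not_or] using hi
  have hcube_mem : ∀ K ∈ cube, ∀ i ∈ S, K ∆ {i} ∈ cube := by
    intro K hK i hiS
    obtain ⟨hiN, hiL⟩ := hiNL i hiS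
    simp only [hcube, Finset.mem_filter, Finset.mem_univ, true_and] at hK ⊢
    constructor
    · intro x hx
      rw [Finset.mem_symmDiff]
      refine Or.inl ⟨hK.1 hx, ?_⟩
      simp only [Finset.mem_singleton]
      rintro rfl
      exact hiN hx
    · refine Finset.disjoint_left.mpr ?_
      intro x hx
      rw [Finset.mem_symmDiff] at hx
      rcases hx with ⟨hx, -⟩ | ⟨hx, -⟩
      · exact fun hxL => Finset.disjoint_left.mp hK.2 hx hxL
      · simp only [Finset.mem_singleton] at hx
        rintro hxL
        exact hiL (hx ▸ hxL)
  have hshift : ∀ (K : Finset (Fin n)) (i : Fin n),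
      (K ∆ {i}) ∆ S = (K ∆ S) ∆ {i} := by
    intro K i
    rw [symmDiff_assoc, symmDiff_comm {i} S, ← symmDiff_assoc]
  have step1 : ∀ K : Finset (Fin n),
      ((-1:ℂ) ^ ((Kᶜ ∩ M).card + signExp N L K)) • exEq n N L K
      = (∑ i ∈ S, ((((-1:ℂ) ^ ((Kᶜ ∩ M).card + signExp N L K))
            * ((-1:ℂ) ^ (low i K + low i (K ∆ S))))
          • (X (K ∆ {i}) * X ((K ∆ S) ∆ {i}))))
        - (((if Odd S.card then (1:ℂ) else 0)
            * ((-1:ℂ) ^ ((Kᶜ ∩ M).card + signExp N L K)))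
          • (X K * X (K ∆ S))) := by
    intro K
    simp only [exEq, ← hS]
    rw [smul_sub, Finset.smul_sum]
    congr 1
    · refine Finset.sum_congr rfl fun i _ => ?_
      rw [smul_smul]
    · by_cases hOdd : Odd S.card
      · rw [if_pos hOdd, if_pos hOdd, one_mul]
      · rw [if_neg hOdd, if_neg hOdd, smul_zero, zero_mul, zero_smul]
  rw [Finset.sum_congr rfl (fun K _ => step1 K), Finset.sum_sub_distrib]
  have step2 : ∑ K ∈ cube, ∑ i ∈ S,
        ((((-1:ℂ) ^ ((Kᶜ ∩ M).card + signExp N L K))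
            * ((-1:ℂ) ^ (low i K + low i (K ∆ S))))
          • (X (K ∆ {i}) * X ((K ∆ S) ∆ {i}) : MvPolynomial (Finset (Fin n)) ℂ))
      = ∑ K ∈ cube, ∑ i ∈ S,
        ((((-1:ℂ) ^ (((K ∆ {i})ᶜ ∩ M).card + signExp N L (K ∆ {i})))
            * ((-1:ℂ) ^ (low i (K ∆ {i}) + low i ((K ∆ {i}) ∆ S))))
          • (X K * X (K ∆ S))) := by
    have l1 := Finset.sum_product' (s := cube) (t := S)
      (f := fun K i => ((((-1:ℂ) ^ ((Kᶜ ∩ M).card + signExp N L K))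
            * ((-1:ℂ) ^ (low i K + low i (K ∆ S))))
          • (X (K ∆ {i}) * X ((K ∆ S) ∆ {i})) : MvPolynomial (Finset (Fin n)) ℂ))
    have l2 := Finset.sum_product' (s := cube) (t := S)
      (f := fun K i => ((((-1:ℂ) ^ (((K ∆ {i})ᶜ ∩ M).card + signExp N L (K ∆ {i})))
            * ((-1:ℂ) ^ (low i (K ∆ {i}) + low i ((K ∆ {i}) ∆ S))))
          • (X K * X (K ∆ S)) : MvPolynomial (Finset (Fin n)) ℂ))
    rw [← l1, ← l2]
    refine Finset.sum_nbij' (fun p => (p.1 ∆ {p.2}, p.2))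
      (fun p => (p.1 ∆ {p.2}, p.2)) ?_ ?_ ?_ ?_ ?_
    · rintro ⟨K, i⟩ hp
      rw [Finset.mem_product] at hp ⊢
      exact ⟨hcube_mem K hp.1 i hp.2, hp.2⟩
    · rintro ⟨K, i⟩ hp
      rw [Finset.mem_product] at hp ⊢
      exact ⟨hcube_mem K hp.1 i hp.2, hp.2⟩
    · rintro ⟨K, i⟩ _
      simp [symmDiff_symmDiff_cancel_right]
    · rintro ⟨K, i⟩ _
      simp [symmDiff_symmDiff_cancel_right]
    · rintro ⟨K, i⟩ _
      simp only [symmDiff_symmDiff_cancel_right]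
      rw [hshift]
  rw [step2]
  have step3 : ∀ K ∈ cube, ∑ i ∈ S,
        ((((-1:ℂ) ^ (((K ∆ {i})ᶜ ∩ M).card + signExp N L (K ∆ {i})))
            * ((-1:ℂ) ^ (low i (K ∆ {i}) + low i ((K ∆ {i}) ∆ S))))
          • (X K * X (K ∆ S) : MvPolynomial (Finset (Fin n)) ℂ))
      = ((((S.card : ℂ) - 2 * M.card)
          * ((-1:ℂ)^n * ((-1:ℂ) ^ ((Kᶜ ∩ M).card + signExp N L K))))
          • (X K * X (K ∆ S))) := by
    intro K _
    rw [← Finset.sum_smul]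
    congr 1
    have h1 : ∀ i ∈ S,
        (((-1:ℂ) ^ (((K ∆ {i})ᶜ ∩ M).card + signExp N L (K ∆ {i})))
            * ((-1:ℂ) ^ (low i (K ∆ {i}) + low i ((K ∆ {i}) ∆ S))))
        = ((if i ∈ M then (-1:ℂ) else 1)
            * ((-1:ℂ)^n * ((-1:ℂ) ^ ((Kᶜ ∩ M).card + signExp N L K)))) := by
      intro i hi
      obtain ⟨hiN, hiL⟩ := hiNL i hi
      exact key_sign N L M K i hNL hiN hiL
    rw [Finset.sum_congr rfl h1, ← Finset.sum_mul, hsum_ite_aux S M hMS]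
  rw [Finset.sum_congr rfl step3, ← Finset.sum_sub_distrib]
  simp only [pEq, ← hS, ← hcube]
  rw [Finset.smul_sum]
  refine Finset.sum_congr rfl fun K _ => ?_
  rw [smul_smul, ← sub_smul]
  congr 1
  ring

end main

/-- Every Lichtenstein embedding equation `p^M_{N,L}` with
`2|M| ∈ 𝓜_{N,L}` lies in the span of the quadratic embedding equations of the
antipodes of `Q_{N,L}`. -/
theorem pEq_mem_span_exEq (n : ℕ) (N L M : Finset (Fin n))
    (hNL : Disjoint N L) (hMN : Disjoint M N) (hML : Disjoint M L)
    (hM : ((2 * M.card : ℤ)) ∈ admissible n N L) :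
    pEq n N L M ∈ Submodule.span ℂ
      {q : MvPolynomial (Finset (Fin n)) ℂ |
        ∃ H : Finset (Fin n), N ⊆ H ∧ Disjoint H L ∧ q = exEq n N L H} := by
  classical
  obtain ⟨-, hMex⟩ := hM
  simp only [Set.mem_insert_iff, Set.mem_singleton_iff, not_or] at hMex
  have hMS : M ⊆ (N ∪ L)ᶜ := by
    intro x hx
    simp only [Finset.mem_compl, Finset.mem_union]
    push_neg
    exact ⟨Finset.disjoint_left.mp hMN hx, Finset.disjoint_left.mp hML hx⟩
  set m : ℕ := ((N ∪ L)ᶜ : Finset (Fin n)).card with hm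
  have hScard : (m : ℤ) = (n : ℤ) - N.card - L.card := by
    have h1 : m = Fintype.card (Fin n) - (N ∪ L).card := Finset.card_compl _
    have h2 := Finset.card_le_univ (N ∪ L)
    rw [Finset.card_union_of_disjoint hNL] at h1 h2
    rw [Fintype.card_fin] at h1
    rw [Fintype.card_fin] at h2
    omega
  set c : ℂ := (((m : ℂ) - 2 * M.card) * (-1:ℂ)^n
      - (if Odd m then (1:ℂ) else 0)) with hcdef
  have hpow : ((-1:ℂ))^n = (((if Even n then 1 else -1 : ℤ)) : ℂ) := by
    rcases Nat.even_or_odd n with h | h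
    · rw [if_pos h, h.neg_one_pow]
      norm_num
    · rw [if_neg (fun he => (Nat.not_odd_iff_even.mpr he) h), h.neg_one_pow]
      norm_num
  have hccases : ∃ a b : ℤ, (a = 1 ∨ a = -1) ∧ (b = 0 ∨ b = 1) ∧
      c = ((a * ((m:ℤ) - 2 * M.card) - b : ℤ) : ℂ) := by
    refine ⟨if Even n then 1 else -1, if Odd m then 1 else 0, ?_, ?_, ?_⟩
    · by_cases h : Even n <;> simp [h]
    · by_cases h : Odd m <;> simp [h]
    · rw [hcdef, hpow]
      by_cases h1 : Even n <;> by_cases h2 : Odd m <;>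
        simp only [h1, h2, if_true, if_false] <;> push_cast <;> ring
  obtain ⟨a, b, ha, hb, hc⟩ := hccases
  have hc0 : c ≠ 0 := by
    rw [hc]
    rw [Ne, Int.cast_eq_zero]
    rcases ha with rfl | rfl <;> rcases hb with rfl | rfl <;> omega
  have hrepr : pEq n N L M = c⁻¹ • ∑ K ∈ (Finset.univ : Finset (Finset (Fin n))).filter
        (fun K => N ⊆ K ∧ Disjoint K L),
        ((-1:ℂ) ^ ((Kᶜ ∩ M).card + signExp N L K)) • exEq n N L K := by
    rw [main_identity N L M hNL hMS, ← hm, ← hcdef]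
    rw [smul_smul, inv_mul_cancel₀ hc0, one_smul]
  rw [hrepr]
  refine Submodule.smul_mem _ _ (Submodule.sum_mem _ fun K hK => ?_)
  rw [Finset.mem_filter] at hK
  exact Submodule.smul_mem _ _ (Submodule.subset_span ⟨K, hK.2.1, hK.2.2, rfl⟩)
end

section
/- Fix n ∈ ℕ and work in the polynomial ring R over ℂ with one variable X_A for each subset A ⊆ [n]. For i ∈ [n], let g_i : R → R be the unique ℂ-algebra endomorphism with g_i(X_A) = (−1)^{|A| + ℓ(i,A)} · X_{A Δ {i}} for every A ⊆ [n], and for H = {h_1 < h_2 < ⋯ < h_k} ⊆ [n] let g_H = g_{h_1} ∘ g_{h_2} ∘ ⋯ ∘ g_{h_k}. Let N, L ⊆ [n] be disjoint, S = [n]∖(N∪L), and let (H, H̄) be an antipode of Q_{N,L} (so N ⊆ H ⊆ [n]∖L and H̄ = H Δ S, hence H Δ H̄ = S). Then ex_{(H,H̄)} = (−1)^{|H|·|S| + inv(H,S)} · g_H( ex_{(∅,S)} ), where inv(H,S) = |{(a,b) ∈ H × S : a > b}| and ex_{(∅,S)} is the quadratic embedding equation of the antipode (∅, S) of Q_{∅,[n]∖S}.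 -/
open scoped symmDiff
open MvPolynomial

/-- The algebra endomorphism `g_i` with `g_i(X_A) = (−1)^{|A| + ℓ(i,A)} X_{A Δ {i}}`. -/
noncomputable def gMap (n : ℕ) (i : Fin n) :
    MvPolynomial (Finset (Fin n)) ℂ →ₐ[ℂ] MvPolynomial (Finset (Fin n)) ℂ :=
  aeval (fun A : Finset (Fin n) =>
    ((-1 : ℂ) ^ (A.card + low i A)) •
      (X (A ∆ {i}) : MvPolynomial (Finset (Fin n)) ℂ))

/-- `g_H = g_{h_1} ∘ g_{h_2} ∘ ⋯ ∘ g_{h_k}` for `H = {h_1 < h_2 < ⋯ < h_k}`. -/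
noncomputable def gSet (n : ℕ) (H : Finset (Fin n))
    (p : MvPolynomial (Finset (Fin n)) ℂ) : MvPolynomial (Finset (Fin n)) ℂ :=
  (H.sort (· ≤ ·)).foldr (fun i q => gMap n i q) p

/-! ### Auxiliary lemmas -/

section Aux

variable {n : ℕ}

lemma neg_one_pow_congr_mod {a b : ℕ} (h : a % 2 = b % 2) : ((-1 : ℂ)) ^ a = (-1) ^ b := by
  conv_lhs => rw [← Nat.div_add_mod a 2]
  conv_rhs => rw [← Nat.div_add_mod b 2]
  rw [pow_add, pow_add, pow_mul, pow_mul, h]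
  norm_num

lemma card_symmDiff_mod (A B : Finset (Fin n)) :
    (A ∆ B).card % 2 = (A.card + B.card) % 2 := by
  have h1 : A ∆ B = (A ∪ B) \ (A ∩ B) := by
    ext x; simp [Finset.mem_symmDiff]; tauto
  have h2 : (A ∩ B) ⊆ A ∪ B := (Finset.inter_subset_left).trans Finset.subset_union_left
  have h3 : (A ∆ B).card = (A ∪ B).card - (A ∩ B).card := by
    rw [h1]; exact Finset.card_sdiff_of_subset h2
  have h4 : (A ∩ B).card ≤ (A ∪ B).card := Finset.card_le_card h2
  have h5 : (A ∪ B).card + (A ∩ B).card = A.card + B.card :=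
    Finset.card_union_add_card_inter A B
  omega

lemma filter_symmDiff (p : Fin n → Prop) [DecidablePred p] (A B : Finset (Fin n)) :
    (A ∆ B).filter p = (A.filter p) ∆ (B.filter p) := by
  ext x; simp [Finset.mem_symmDiff, Finset.mem_filter]; tauto

lemma low_symmDiff_mod (h : Fin n) (A B : Finset (Fin n)) :
    low h (A ∆ B) % 2 = (low h A + low h B) % 2 := by
  unfold low
  rw [filter_symmDiff]
  exact card_symmDiff_mod _ _

lemma gMap_X (h : Fin n) (A : Finset (Fin n)) :
    gMap n h (X A) =
      ((-1 : ℂ) ^ (A.card + low h A)) • (X (A ∆ {h}) : MvPolynomial (Finset (Fin n)) ℂ) := by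
  simp [gMap]

/-- The key single-step lemma: applying `g_h` to `ex_{(K, K∆S)}` gives
`(-1)^{|S| + ℓ(h,S)} ex_{(K∆{h}, K∆{h}∆S)}`. -/
lemma gMap_exEq (N L K : Finset (Fin n)) (h : Fin n) :
    gMap n h (exEq n N L K) =
      ((-1 : ℂ) ^ (((N ∪ L)ᶜ : Finset (Fin n)).card + low h ((N ∪ L)ᶜ))) •
        exEq n N L (K ∆ {h}) := by
  rw [exEq, exEq, map_sub, map_sum, smul_sub, Finset.smul_sum]
  congr 1
  · refine Finset.sum_congr rfl (fun i hi => ?_)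
    rw [map_smul, map_mul, gMap_X, gMap_X, smul_mul_smul_comm, smul_smul, smul_smul]
    rw [symmDiff_right_comm K ({i} : Finset (Fin n)) ({h} : Finset (Fin n)),
      symmDiff_right_comm (K ∆ (N ∪ L)ᶜ) ({i} : Finset (Fin n)) ({h} : Finset (Fin n)),
      symmDiff_right_comm K ((N ∪ L)ᶜ) ({h} : Finset (Fin n))]
    congr 1
    rw [← pow_add, ← pow_add, ← pow_add]
    apply neg_one_pow_congr_mod
    have e1 := card_symmDiff_mod (K ∆ (N ∪ L)ᶜ) ({i} : Finset (Fin n))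
    have e2 := card_symmDiff_mod K ((N ∪ L)ᶜ)
    have e3 := card_symmDiff_mod K ({i} : Finset (Fin n))
    have e4 := low_symmDiff_mod h (K ∆ (N ∪ L)ᶜ) ({i} : Finset (Fin n))
    have e5 := low_symmDiff_mod h K ((N ∪ L)ᶜ)
    have e6 := low_symmDiff_mod h K ({i} : Finset (Fin n))
    have e7 := low_symmDiff_mod i (K ∆ {h}) ((N ∪ L)ᶜ)
    have e8 := low_symmDiff_mod i K ({h} : Finset (Fin n))
    have e9 := low_symmDiff_mod i K ((N ∪ L)ᶜ)
    simp only [Finset.card_singleton] at *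
    omega
  · split
    · rw [map_mul, gMap_X, gMap_X, smul_mul_smul_comm]
      rw [symmDiff_right_comm K ((N ∪ L)ᶜ) ({h} : Finset (Fin n))]
      congr 1
      rw [← pow_add]
      apply neg_one_pow_congr_mod
      have e2 := card_symmDiff_mod K ((N ∪ L)ᶜ)
      have e5 := low_symmDiff_mod h K ((N ∪ L)ᶜ)
      omega
    · simp

/-- Iterated version over a list. -/
lemma foldr_gMap_exEq (N L K : Finset (Fin n)) (l : List (Fin n)) :
    l.foldr (fun i q => gMap n i q) (exEq n N L K) =
      ((-1 : ℂ) ^ (l.length * ((N ∪ L)ᶜ : Finset (Fin n)).card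
          + (l.map (fun h => low h ((N ∪ L)ᶜ))).sum)) •
        exEq n N L (l.foldr (fun h K => K ∆ {h}) K) := by
  induction l with
  | nil => simp
  | cons h t ih =>
    simp only [List.foldr_cons, ih, map_smul, gMap_exEq, smul_smul, ← pow_add,
      List.length_cons, List.map_cons, List.sum_cons]
    congr 2
    ring

lemma foldr_symmDiff_toFinset (l : List (Fin n)) (hl : l.Nodup) :
    l.foldr (fun h K => K ∆ {h}) (∅ : Finset (Fin n)) = l.toFinset := by
  induction l with
  | nil => simp
  | cons h t ih =>
    rw [List.nodup_cons] at hl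
    rw [List.foldr_cons, ih hl.2, List.toFinset_cons]
    have hmem : h ∉ t := hl.1
    ext x
    simp [Finset.mem_symmDiff, Finset.mem_insert]
    have hxt : x = h → x ∉ t := fun e => e ▸ hmem
    tauto

lemma sort_map_sum (H : Finset (Fin n)) (f : Fin n → ℕ) :
    ((H.sort (· ≤ ·)).map f).sum = ∑ h ∈ H, f h := by
  rw [Finset.sum, ← Finset.sort_eq H (· ≤ ·), Multiset.map_coe, Multiset.sum_coe]

lemma invCount_eq_sum_low (A B : Finset (Fin n)) :
    invCount A B = ∑ h ∈ A, low h B := by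
  unfold invCount low
  rw [Finset.card_filter, Finset.sum_product]
  refine Finset.sum_congr rfl fun h _ => ?_
  rw [Finset.card_filter]

end Aux

/-- Each quadratic embedding equation is obtained from the basic one
`ex_{(∅,S)}` by the group-element action `g_H`, up to an explicit sign. -/
theorem exEq_eq_gSet_exEq_empty (n : ℕ) (N L H : Finset (Fin n))
    (hNL : Disjoint N L) (hNH : N ⊆ H) (hHL : Disjoint H L) :
    exEq n N L H =
      ((-1 : ℂ) ^ (H.card * ((N ∪ L)ᶜ : Finset (Fin n)).card
          + invCount H ((N ∪ L)ᶜ))) •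
        gSet n H (exEq n ∅ (N ∪ L) ∅) := by
  have key : exEq n ∅ (N ∪ L) (∅ : Finset (Fin n)) = exEq n N L (∅ : Finset (Fin n)) := by
    simp only [exEq, Finset.empty_union]
  rw [gSet, key, foldr_gMap_exEq, foldr_symmDiff_toFinset _ (Finset.sort_nodup H _),
    Finset.sort_toFinset, Finset.length_sort, sort_map_sum, ← invCount_eq_sum_low,
    smul_smul, ← pow_add, ← two_mul]
  have hev : Even (2 * (H.card * ((N ∪ L)ᶜ : Finset (Fin n)).card
      + invCount H ((N ∪ L)ᶜ))) := even_two_mul _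
  rw [hev.neg_one_pow, one_smul]
end

section
/- Fix n ∈ ℕ and work in the polynomial ring R over ℂ with one variable X_A for each subset A ⊆ [n]. For I, J ⊆ [n] define F_{I,J} = Σ_{i ∈ IΔJ} (−1)^{ℓ(i,I)+ℓ(i,J)} X_{IΔ{i}} X_{JΔ{i}} when |I Δ J| is even, and F_{I,J} = −X_I X_J + Σ_{i ∈ IΔJ} (−1)^{ℓ(i,I)+ℓ(i,J)} X_{IΔ{i}} X_{JΔ{i}} when |I Δ J| is odd. Let W be the ℂ-linear span of { F_{I,J} : I, J ⊆ [n], |I Δ J| ≥ 3 }, and let R_+ ⊆ R be the subalgebra generated by the variables X_A with |A| even. Then W ∩ R_+ equals the ℂ-linear span of { F_{I,J} : I, J ⊆ [n], |I| and |J| both odd, |I Δ J| ≥ 4 }. -/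
open scoped symmDiff
open MvPolynomial

/-- The type B quadratic embedding equation `F_{I,J}`. -/
noncomputable def FEq (n : ℕ) (I J : Finset (Fin n)) :
    MvPolynomial (Finset (Fin n)) ℂ :=
  (∑ i ∈ I ∆ J, ((-1 : ℂ) ^ (low i I + low i J)) •
      (X (I ∆ {i}) * X (J ∆ {i})))
  - (if Odd (I ∆ J).card then X I * X J else 0)

/-!
Setting the variables `X_A` with `|A|` odd to zero is an algebra endomorphism `π` of `R` that
fixes `R_+` pointwise and maps `R` onto `R_+`. Since `|I Δ {i}|` and `|I|` have opposite
parities, `π` fixes `F_{I,J}` when `|I|` and `|J|` are odd and kills it otherwise (every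
monomial of `F_{I,J}` then has a factor with odd index). Hence `π` maps `W` onto the span of the
`F_{I,J}` with `|I|`, `|J|` odd, and an element of `W ∩ R_+` equals its image. For such `I, J`
the set `I Δ J` has even size, so `|I Δ J| ≥ 3` forces `|I Δ J| ≥ 4`.
-/

namespace Finset

variable {α : Type*} [DecidableEq α]

theorem card_symmDiff_add_two_mul_card_inter (s t : Finset α) :
    #(s ∆ t) + 2 * #(s ∩ t) = #s + #t := by
  have hsymm : #(s ∆ t) = #(s \ t) + #(t \ s) := by
    rw [symmDiff_def, sup_eq_union]
    exact card_union_of_disjoint (sdiff_disjoint.mono_right sdiff_subset)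
  have hs := card_sdiff_add_card_inter s t
  have ht := card_sdiff_add_card_inter t s
  rw [inter_comm] at ht
  omega

theorem even_card_symmDiff_iff (s t : Finset α) :
    Even #(s ∆ t) ↔ (Even #s ↔ Even #t) := by
  have := card_symmDiff_add_two_mul_card_inter s t
  simp only [Nat.even_iff]
  omega

theorem even_card_symmDiff_of_odd {s t : Finset α} (hs : Odd #s) (ht : Odd #t) :
    Even #(s ∆ t) := by
  simp [even_card_symmDiff_iff, Nat.not_even_iff_odd.2 hs, Nat.not_even_iff_odd.2 ht]

theorem even_card_symmDiff_singleton_iff (s : Finset α) (a : α) :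
    Even #(s ∆ {a}) ↔ Odd #s := by
  simp [even_card_symmDiff_iff, ← Nat.not_even_iff_odd]

end Finset

namespace MvPolynomial

variable {R σ : Type*} [CommSemiring R]

noncomputable def killOutside (s : Set σ) : MvPolynomial σ R →ₐ[R] MvPolynomial σ R :=
  aeval (s.indicator X)

theorem killOutside_X (s : Set σ) (i : σ) :
    killOutside (R := R) s (X i) = s.indicator X i :=
  aeval_X _ i

theorem killOutside_X_mul_X_of_mem {s : Set σ} {i j : σ} (hi : i ∈ s) (hj : j ∈ s) :
    killOutside (R := R) s (X i * X j) = X i * X j := by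
  rw [map_mul, killOutside_X, killOutside_X, Set.indicator_of_mem hi,
    Set.indicator_of_mem hj]

theorem killOutside_X_mul_X_of_notMem {s : Set σ} {i j : σ} (h : i ∉ s ∨ j ∉ s) :
    killOutside (R := R) s (X i * X j) = 0 := by
  rw [map_mul, killOutside_X, killOutside_X]
  rcases h with h | h <;> simp [Set.indicator_of_notMem h]

theorem killOutside_mem_adjoin (s : Set σ) (p : MvPolynomial σ R) :
    killOutside s p ∈ Algebra.adjoin R (X '' s) := by
  refine (aeval_range (R := R) (s.indicator X)).le.trans (Algebra.adjoin_le ?_) ⟨p, rfl⟩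
  rintro _ ⟨i, rfl⟩
  by_cases hi : i ∈ s
  · exact Algebra.subset_adjoin ⟨i, hi, (Set.indicator_of_mem hi X).symm⟩
  · rw [Set.indicator_of_notMem hi]
    exact zero_mem _

theorem killOutside_eq_self_of_mem_adjoin {s : Set σ} {p : MvPolynomial σ R}
    (hp : p ∈ Algebra.adjoin R (X '' s)) : killOutside s p = p := by
  refine AlgHom.adjoin_le_equalizer (killOutside s) (AlgHom.id R _) ?_ hp
  rintro _ ⟨i, hi, rfl⟩
  simp [killOutside_X, Set.indicator_of_mem hi]

end MvPolynomial

open Finset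

section EvenProjection

variable {n : ℕ}

theorem killOutside_FEq_of_odd {I J : Finset (Fin n)} (hI : Odd #I) (hJ : Odd #J) :
    killOutside {A | Even #A} (FEq n I J) = FEq n I J := by
  rw [FEq, if_neg (Nat.not_odd_iff_even.2 (even_card_symmDiff_of_odd hI hJ)), sub_zero,
    map_sum]
  refine sum_congr rfl fun i _ => ?_
  rw [map_smul, killOutside_X_mul_X_of_mem]
  · exact (even_card_symmDiff_singleton_iff I i).2 hI
  · exact (even_card_symmDiff_singleton_iff J i).2 hJ

theorem killOutside_FEq_of_even {I J : Finset (Fin n)} (h : Even #I ∨ Even #J) :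
    killOutside {A | Even #A} (FEq n I J) = 0 := by
  have hflip : ∀ A : Finset (Fin n), Even #A → ∀ i, ¬Even #(A ∆ {i}) := fun A hA i => by
    rwa [even_card_symmDiff_singleton_iff, Nat.not_odd_iff_even]
  have hsum : ∀ i ∈ I ∆ J, killOutside {A | Even #A}
      ((-1 : ℂ) ^ (low i I + low i J) • (X (I ∆ {i}) * X (J ∆ {i}))) = 0 := fun i _ => by
    rw [map_smul, killOutside_X_mul_X_of_notMem (s := {A | Even #A})
      (h.imp (hflip I · i) (hflip J · i)), smul_zero]
  rw [FEq, map_sub, map_sum, sum_eq_zero hsum, zero_sub, neg_eq_zero]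
  split_ifs with hIJ
  · refine killOutside_X_mul_X_of_notMem ?_
    rw [← Nat.not_even_iff_odd, even_card_symmDiff_iff] at hIJ
    tauto
  · exact map_zero _

end EvenProjection

/-- The intersection of the span of the type B quadratic embedding
equations with the subalgebra generated by the variables indexed by even-cardinality sets
is the span of the type D quadratic embedding equations on the even demicube. -/
theorem typeB_span_inter_even_subalgebra (n : ℕ) :
    Submodule.span ℂ
        {p : MvPolynomial (Finset (Fin n)) ℂ |
          ∃ I J : Finset (Fin n), 3 ≤ (I ∆ J).card ∧ p = FEq n I J}
      ⊓ Subalgebra.toSubmodule (Algebra.adjoin ℂ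
          {p : MvPolynomial (Finset (Fin n)) ℂ |
            ∃ A : Finset (Fin n), Even A.card ∧ p = X A})
    = Submodule.span ℂ
        {p : MvPolynomial (Finset (Fin n)) ℂ |
          ∃ I J : Finset (Fin n),
            Odd I.card ∧ Odd J.card ∧ 4 ≤ (I ∆ J).card ∧ p = FEq n I J} := by
  have hgen : {p : MvPolynomial (Finset (Fin n)) ℂ | ∃ A : Finset (Fin n), Even #A ∧ p = X A}
      = X '' {A | Even #A} := by
    ext
    simp [eq_comm]
  rw [hgen]
  apply le_antisymm
  · rintro p ⟨hW, hp⟩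
    rw [← killOutside_eq_self_of_mem_adjoin hp]
    refine ((Submodule.map_span_le (killOutside {A | Even #A}).toLinearMap _ _).2 ?_)
      (Submodule.mem_map_of_mem hW)
    rintro _ ⟨I, J, h3, rfl⟩
    by_cases h : Odd #I ∧ Odd #J
    · obtain ⟨hI, hJ⟩ := h
      obtain ⟨k, hk⟩ := even_card_symmDiff_of_odd hI hJ
      rw [AlgHom.toLinearMap_apply, killOutside_FEq_of_odd hI hJ]
      exact Submodule.subset_span ⟨I, J, hI, hJ, by omega, rfl⟩
    · rw [AlgHom.toLinearMap_apply, killOutside_FEq_of_even]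
      · exact zero_mem _
      · simpa only [← Nat.not_odd_iff_even, ← not_and_or] using h
  · rw [Submodule.span_le]
    rintro _ ⟨I, J, hI, hJ, h4, rfl⟩
    refine ⟨Submodule.subset_span ⟨I, J, by omega, rfl⟩, ?_⟩
    exact killOutside_FEq_of_odd hI hJ ▸ killOutside_mem_adjoin _ _
end
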